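/- arXiv:1010.3497 — 2 statements merged into one kernel-verified Lean document; each statement's English description precedes it below -/
import Mathlib

section
/- The Landau operator L := D_x³ + x·D_x²D_y + 2·D_x² + (2x+2)·D_xD_y + D_x + (2+x)·D_y has no factorization of the type (X)(S)(X): there do not exist smooth functions a, b, c : ℝ² → ℝ such that L = (D_x + a) ∘ (D_x + x·D_y + b) ∘ (D_x + c) as operators on smooth functions ℝ² → ℝ (even though L has factorizations of the types (X)(SX) and (SX)(X)). -/
/-- Operators act on functions `ℝ × ℝ → ℝ`. -/
abbrev Fn := ℝ × ℝ → ℝ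

/-- Partial derivative in the first coordinate direction. -/
noncomputable def Dx (u : Fn) : Fn := fun p => fderiv ℝ u p (1, 0)

/-- Partial derivative in the second coordinate direction. -/
noncomputable def Dy (u : Fn) : Fn := fun p => fderiv ℝ u p (0, 1)

/-- The first coordinate function `x`. -/
def xf : Fn := fun p => p.1

/-- The second coordinate function `y`. -/
def yf : Fn := fun p => p.2

/-- Smoothness of a function `ℝ × ℝ → ℝ`. -/
def IsSmooth (u : Fn) : Prop := ContDiff ℝ (⊤ : ℕ∞) u

/-- The Landau operator `L = D_x³ + x·D_x²D_y + 2·D_x² + (2x+2)·D_xD_y + D_x + (2+x)·D_y`. -/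
noncomputable def Landau (u : Fn) : Fn :=
  Dx (Dx (Dx u)) + xf * Dx (Dx (Dy u)) + 2 * Dx (Dx u) +
    (2 * xf + 2) * Dx (Dy u) + Dx u + (2 + xf) * Dy u

set_option linter.unnecessarySimpa false


lemma smooth_dx' {f : Fn} (hf : IsSmooth f) : IsSmooth (Dx f) :=
  (hf.fderiv_right (by simp)).clm_apply contDiff_const
lemma smooth_dy' {f : Fn} (hf : IsSmooth f) : IsSmooth (Dy f) :=
  (hf.fderiv_right (by simp)).clm_apply contDiff_const
lemma smooth_add' {f g : Fn} (hf : IsSmooth f) (hg : IsSmooth g) : IsSmooth (f + g) := hf.add hg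
lemma smooth_mul' {f g : Fn} (hf : IsSmooth f) (hg : IsSmooth g) : IsSmooth (f * g) := hf.mul hg
lemma smooth_xf' : IsSmooth xf := contDiff_fst
lemma smooth_yf' : IsSmooth yf := contDiff_snd
lemma smooth_one' : IsSmooth 1 := contDiff_const

lemma Dx_add {f g : Fn} (hf : IsSmooth f) (hg : IsSmooth g) : Dx (f + g) = Dx f + Dx g := by
  funext p
  have : fderiv ℝ (f + g) p = fderiv ℝ f p + fderiv ℝ g p := by
    simpa [Pi.add_def] using fderiv_fun_add (hf.differentiable (by simp)).differentiableAt
      (hg.differentiable (by simp)).differentiableAt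
  simp [Dx, this]

lemma Dy_add {f g : Fn} (hf : IsSmooth f) (hg : IsSmooth g) : Dy (f + g) = Dy f + Dy g := by
  funext p
  have : fderiv ℝ (f + g) p = fderiv ℝ f p + fderiv ℝ g p := by
    simpa [Pi.add_def] using fderiv_fun_add (hf.differentiable (by simp)).differentiableAt
      (hg.differentiable (by simp)).differentiableAt
  simp [Dy, this]

lemma Dx_mul {f g : Fn} (hf : IsSmooth f) (hg : IsSmooth g) :
    Dx (f * g) = Dx f * g + f * Dx g := by
  funext p
  have : fderiv ℝ (f * g) p = f p • fderiv ℝ g p + g p • fderiv ℝ f p := by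
    simpa [Pi.mul_def] using fderiv_fun_mul (hf.differentiable (by simp)).differentiableAt
      (hg.differentiable (by simp)).differentiableAt
  simp [Dx, this]
  ring

lemma Dy_mul {f g : Fn} (hf : IsSmooth f) (hg : IsSmooth g) :
    Dy (f * g) = Dy f * g + f * Dy g := by
  funext p
  have : fderiv ℝ (f * g) p = f p • fderiv ℝ g p + g p • fderiv ℝ f p := by
    simpa [Pi.mul_def] using fderiv_fun_mul (hf.differentiable (by simp)).differentiableAt
      (hg.differentiable (by simp)).differentiableAt
  simp [Dy, this]
  ring

lemma Dx_xf : Dx xf = 1 := by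
  funext p
  have : fderiv ℝ xf p = ContinuousLinearMap.fst ℝ ℝ ℝ := hasFDerivAt_fst.fderiv
  simp [Dx, this]

lemma Dy_xf : Dy xf = 0 := by
  funext p
  have : fderiv ℝ xf p = ContinuousLinearMap.fst ℝ ℝ ℝ := hasFDerivAt_fst.fderiv
  simp [Dy, this]

lemma Dx_yf : Dx yf = 0 := by
  funext p
  have : fderiv ℝ yf p = ContinuousLinearMap.snd ℝ ℝ ℝ := hasFDerivAt_snd.fderiv
  simp [Dx, this]

lemma Dy_yf : Dy yf = 1 := by
  funext p
  have : fderiv ℝ yf p = ContinuousLinearMap.snd ℝ ℝ ℝ := hasFDerivAt_snd.fderiv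
  simp [Dy, this]

lemma Dx_one : Dx 1 = 0 := by
  funext p
  have : fderiv ℝ (1 : Fn) p = 0 := by
    simpa [Pi.one_def] using fderiv_const_apply (1:ℝ) (x := p)
  simp [Dx, this]

lemma Dy_one : Dy 1 = 0 := by
  funext p
  have : fderiv ℝ (1 : Fn) p = 0 := by
    simpa [Pi.one_def] using fderiv_const_apply (1:ℝ) (x := p)
  simp [Dy, this]

/-- The Landau operator has no factorization of the type `(X)(S)(X)`: there are no
smooth `a, b, c` with `L = (D_x + a) ∘ (D_x + x·D_y + b) ∘ (D_x + c)`. -/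
theorem landau_no_XSX_factorization :
    ¬ ∃ a b c : Fn, IsSmooth a ∧ IsSmooth b ∧ IsSmooth c ∧
      ∀ u : Fn, IsSmooth u →
        (fun v => Dx v + a * v)
          ((fun v => Dx v + xf * Dy v + b * v)
            ((fun v => Dx v + c * v) u)) = Landau u := by
  rintro ⟨a, b, c, ha, hb, hc, h⟩
  set u : Fn := xf * yf with hu_def
  have hu : IsSmooth u := smooth_mul' smooth_xf' smooth_yf'
  have h2 := congrFun (h u hu) ((0, 0) : ℝ × ℝ)
  -- compute Dx u, Dy u
  have hDxu : Dx u = yf := by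
    rw [hu_def, Dx_mul smooth_xf' smooth_yf', Dx_xf, Dx_yf]; ring
  have hDyu : Dy u = xf := by
    rw [hu_def, Dy_mul smooth_xf' smooth_yf', Dy_xf, Dy_yf]; ring
  -- inner factor
  have hw : Dx u + c * u = yf + c * u := by rw [hDxu]
  set w : Fn := yf + c * u with hw_def
  have hwS : IsSmooth w := smooth_add' smooth_yf' (smooth_mul' hc hu)
  have hcu : IsSmooth (c * u) := smooth_mul' hc hu
  have hDxw : Dx w = Dx c * u + c * yf := by
    rw [hw_def, Dx_add smooth_yf' hcu, Dx_yf, Dx_mul hc hu, hDxu]; ring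
  have hDyw : Dy w = 1 + Dy c * u + c * xf := by
    rw [hw_def, Dy_add smooth_yf' hcu, Dy_yf, Dy_mul hc hu, hDyu]; ring
  -- middle factor applied
  set v : Fn := Dx w + xf * Dy w + b * w with hv_def
  have hv : v = Dx c * u + c * yf + xf * (1 + Dy c * u + c * xf) + b * w := by
    rw [hv_def, hDxw, hDyw]
  -- smoothness pieces
  have hDxc : IsSmooth (Dx c) := smooth_dx' hc
  have hDyc : IsSmooth (Dy c) := smooth_dy' hc
  -- compute Dx v
  have hDxv : Dx v =
      (Dx (Dx c) * u + Dx c * yf) + (Dx c * yf + c * 0)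
      + (1 * (1 + Dy c * u + c * xf) + xf * ((Dx (Dy c) * u + Dy c * yf) + (Dx c * xf + c * 1)))
      + (Dx b * w + b * (Dx c * u + c * yf)) := by
    rw [hv]
    rw [Dx_add (smooth_add' (smooth_add' (smooth_mul' hDxc hu) (smooth_mul' hc smooth_yf'))
          (smooth_mul' smooth_xf' (smooth_add' (smooth_add' smooth_one' (smooth_mul' hDyc hu))
            (smooth_mul' hc smooth_xf')))) (smooth_mul' hb hwS)]
    rw [Dx_add (smooth_add' (smooth_mul' hDxc hu) (smooth_mul' hc smooth_yf'))
          (smooth_mul' smooth_xf' (smooth_add' (smooth_add' smooth_one' (smooth_mul' hDyc hu))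
            (smooth_mul' hc smooth_xf')))]
    rw [Dx_add (smooth_mul' hDxc hu) (smooth_mul' hc smooth_yf')]
    rw [Dx_mul hDxc hu, Dx_mul hc smooth_yf',
        Dx_mul smooth_xf' (smooth_add' (smooth_add' smooth_one' (smooth_mul' hDyc hu))
          (smooth_mul' hc smooth_xf')),
        Dx_add (smooth_add' smooth_one' (smooth_mul' hDyc hu)) (smooth_mul' hc smooth_xf'),
        Dx_add smooth_one' (smooth_mul' hDyc hu),
        Dx_mul hDyc hu, Dx_mul hc smooth_xf',
        Dx_mul hb hwS, hDxw, hDxu, Dx_yf, Dx_xf, Dx_one]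
    ring
  -- Landau side derivatives
  have l1 : Dx (Dx u) = 0 := by rw [hDxu, Dx_yf]
  have l2 : Dx (Dx (Dx u)) = 0 := by rw [l1]; funext p; simp [Dx, Pi.zero_def]
  have l3 : Dx (Dy u) = 1 := by rw [hDyu, Dx_xf]
  have l4 : Dx (Dx (Dy u)) = 0 := by rw [l3, Dx_one]
  -- now evaluate h2 at (0,0)
  simp only at h2
  rw [hw, ← hv_def] at h2
  rw [Landau] at h2
  rw [hDxv, hv, l2, l4, l1, l3, hDxu, hDyu, hw_def, hu_def] at h2
  simp [xf, yf, Pi.add_apply, Pi.mul_apply] at h2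
end

section
/- Let h, a, b, c, e, f, g, k : ℝ² → ℝ be smooth functions. If (D_y + h) ∘ (D_xx + a·D_x + b·D_y + c) = (D_xy + e·D_x + f·D_y + g) ∘ (D_x + k) as operators on smooth functions ℝ² → ℝ, then g = ∂_y f + e·f and h = e; consequently the second-order factor on the right-hand side factors as D_xy + e·D_x + f·D_y + g = (D_y + e) ∘ (D_x + f), and the whole operator factors into three first-order factors with left factor D_y + h and right factor D_x + k. -/
lemma IsSmooth.diff {u : Fn} (hu : IsSmooth u) : Differentiable ℝ u :=
  hu.differentiable (by simp)

lemma IsSmooth.add {u v : Fn} (hu : IsSmooth u) (hv : IsSmooth v) : IsSmooth (u + v) :=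
  ContDiff.add hu hv

lemma IsSmooth.mul {u v : Fn} (hu : IsSmooth u) (hv : IsSmooth v) : IsSmooth (u * v) :=
  ContDiff.mul hu hv

lemma IsSmooth.fderiv {u : Fn} (hu : IsSmooth u) : ContDiff ℝ (⊤ : ℕ∞) (fderiv ℝ u) :=
  hu.fderiv_right (by simp)

lemma IsSmooth.dx {u : Fn} (hu : IsSmooth u) : IsSmooth (Dx u) :=
  hu.fderiv.clm_apply contDiff_const

lemma IsSmooth.dy {u : Fn} (hu : IsSmooth u) : IsSmooth (Dy u) :=
  hu.fderiv.clm_apply contDiff_const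

lemma Dx_add_apply {u v : Fn} {p} (hu : DifferentiableAt ℝ u p) (hv : DifferentiableAt ℝ v p) :
    Dx (u + v) p = Dx u p + Dx v p := by
  have : fderiv ℝ (fun q => u q + v q) p = fderiv ℝ u p + fderiv ℝ v p := fderiv_add hu hv
  simp [Dx]
  rw [show (u + v) = fun q => u q + v q from rfl, this]; simp

lemma Dy_add_apply {u v : Fn} {p} (hu : DifferentiableAt ℝ u p) (hv : DifferentiableAt ℝ v p) :
    Dy (u + v) p = Dy u p + Dy v p := by
  have : fderiv ℝ (fun q => u q + v q) p = fderiv ℝ u p + fderiv ℝ v p := fderiv_add hu hv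
  simp [Dy]
  rw [show (u + v) = fun q => u q + v q from rfl, this]; simp

lemma Dx_mul_apply {u v : Fn} {p} (hu : DifferentiableAt ℝ u p) (hv : DifferentiableAt ℝ v p) :
    Dx (u * v) p = Dx u p * v p + u p * Dx v p := by
  have : fderiv ℝ (fun q => u q * v q) p = u p • fderiv ℝ v p + v p • fderiv ℝ u p :=
    fderiv_mul hu hv
  simp only [Dx]
  rw [show (u * v) = fun q => u q * v q from rfl, this]; simp; ring

lemma Dy_mul_apply {u v : Fn} {p} (hu : DifferentiableAt ℝ u p) (hv : DifferentiableAt ℝ v p) :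
    Dy (u * v) p = Dy u p * v p + u p * Dy v p := by
  have : fderiv ℝ (fun q => u q * v q) p = u p • fderiv ℝ v p + v p • fderiv ℝ u p :=
    fderiv_mul hu hv
  simp only [Dy]
  rw [show (u * v) = fun q => u q * v q from rfl, this]; simp; ring

lemma Dx_mul_s13 {u v : Fn} (hu : Differentiable ℝ u) (hv : Differentiable ℝ v) :
    Dx (u * v) = Dx u * v + u * Dx v :=
  funext fun p => Dx_mul_apply (hu p) (hv p)

lemma Dy_mul_s13 {u v : Fn} (hu : Differentiable ℝ u) (hv : Differentiable ℝ v) :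
    Dy (u * v) = Dy u * v + u * Dy v :=
  funext fun p => Dy_mul_apply (hu p) (hv p)

lemma Dx_Dy {u : Fn} (hu : IsSmooth u) : Dx (Dy u) = Dy (Dx u) := by
  funext p
  have hsym : IsSymmSndFDerivAt ℝ u p :=
    (hu.contDiffAt).isSymmSndFDerivAt (by rw [minSmoothness_of_isRCLikeNormedField]; exact WithTop.coe_le_coe.mpr (le_top : (2:ℕ∞) ≤ ⊤))
  have hd : DifferentiableAt ℝ (fderiv ℝ u) p := hu.fderiv.differentiable (by simp) p
  have h1 : Dx (Dy u) p = fderiv ℝ (fderiv ℝ u) p (1, 0) (0, 1) := by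
    simp only [Dx]
    rw [show Dy u = (fun q => (fderiv ℝ u q) (0, 1)) from rfl,
      fderiv_clm_apply hd (differentiableAt_const _)]
    simp
  have h2 : Dy (Dx u) p = fderiv ℝ (fderiv ℝ u) p (0, 1) (1, 0) := by
    simp only [Dy]
    rw [show Dx u = (fun q => (fderiv ℝ u q) (1, 0)) from rfl,
      fderiv_clm_apply hd (differentiableAt_const _)]
    simp
  rw [h1, h2, hsym]

def Xc (q : ℝ × ℝ) : Fn := fun p => p.1 - q.1
def Yc (q : ℝ × ℝ) : Fn := fun p => p.2 - q.2

lemma isSmooth_Xc (q) : IsSmooth (Xc q) := (contDiff_fst.sub contDiff_const)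
lemma isSmooth_Yc (q) : IsSmooth (Yc q) := (contDiff_snd.sub contDiff_const)
lemma isSmooth_const (r : ℝ) : IsSmooth (fun _ => r) := contDiff_const

lemma hasFDerivAt_Xc (q p) : HasFDerivAt (Xc q) (ContinuousLinearMap.fst ℝ ℝ ℝ) p :=
  (hasFDerivAt_fst).sub_const _
lemma hasFDerivAt_Yc (q p) : HasFDerivAt (Yc q) (ContinuousLinearMap.snd ℝ ℝ ℝ) p :=
  (hasFDerivAt_snd).sub_const _

lemma Dx_Xc (q) : Dx (Xc q) = fun _ => 1 := by
  funext p; simp [Dx, (hasFDerivAt_Xc q p).fderiv]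
lemma Dy_Xc (q) : Dy (Xc q) = fun _ => 0 := by
  funext p; simp [Dy, (hasFDerivAt_Xc q p).fderiv]
lemma Dx_Yc (q) : Dx (Yc q) = fun _ => 0 := by
  funext p; simp [Dx, (hasFDerivAt_Yc q p).fderiv]
lemma Dy_Yc (q) : Dy (Yc q) = fun _ => 1 := by
  funext p; simp [Dy, (hasFDerivAt_Yc q p).fderiv]

lemma Dx_const (r : ℝ) : Dx (fun _ => r) = fun _ => 0 := by
  funext p; simp [Dx]
lemma Dy_const (r : ℝ) : Dy (fun _ => r) = fun _ => 0 := by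
  funext p; simp [Dy]

section Extract
variable (h a b c e f g k : Fn)
    (hh : IsSmooth h) (ha : IsSmooth a) (hb : IsSmooth b) (hc : IsSmooth c)
    (he : IsSmooth e) (hf : IsSmooth f) (hg : IsSmooth g) (hk : IsSmooth k)
    (heq : ∀ u : Fn, IsSmooth u →
      (fun v => Dy v + h * v)
        (Dx (Dx u) + a * Dx u + b * Dy u + c * u) =
      (fun v => Dx (Dy v) + e * Dx v + f * Dy v + g * v)
        (Dx u + k * u))

include hh ha hb hc he hf hg hk heq in
lemma h_eq_e : h = e := by
  funext q
  set X := Xc q with hX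
  have sX : IsSmooth X := isSmooth_Xc q
  have su : IsSmooth (X * X) := sX.mul sX
  have key := congrFun (heq (X * X) su) q
  simp only [] at key
  -- derivatives of the test function
  have hDxu : Dx (X * X) = X + X := by
    rw [Dx_mul_s13 sX.diff sX.diff, hX, Dx_Xc]
    funext p; simp
  have hDyu : Dy (X * X) = fun _ => 0 := by
    rw [Dy_mul_s13 sX.diff sX.diff, hX, Dy_Xc]
    funext p; simp
  have hDxxu : Dx (X + X) = fun _ => 2 := by
    funext p
    rw [Dx_add_apply (sX.diff p) (sX.diff p), hX, Dx_Xc]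
    norm_num
  have hX0 : X q = 0 := by simp [hX, Xc]
  rw [hDxu, hDyu, hDxxu] at key
  -- LHS evaluation
  have sXX : IsSmooth (X + X) := sX.add sX
  have s2 : IsSmooth (fun _ : ℝ × ℝ => (2:ℝ)) := isSmooth_const 2
  have sL1 : IsSmooth ((fun _ : ℝ × ℝ => (2:ℝ)) + a * (X + X)) := s2.add (ha.mul sXX)
  have sL2 : IsSmooth ((fun _ : ℝ × ℝ => (2:ℝ)) + a * (X + X) + b * (fun _ => 0)) :=
    sL1.add (hb.mul (isSmooth_const 0))
  have lhs : Dy ((fun _ : ℝ × ℝ => (2:ℝ)) + a * (X + X) + b * (fun _ => 0) + c * (X * X)) q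
      = 0 := by
    rw [Dy_add_apply (sL2.diff q) ((hc.mul su).diff q),
        Dy_add_apply (sL1.diff q) ((hb.mul (isSmooth_const 0)).diff q),
        Dy_add_apply (s2.diff q) ((ha.mul sXX).diff q),
        Dy_mul_apply (ha.diff q) (sXX.diff q),
        Dy_mul_apply (hb.diff q) ((isSmooth_const 0).diff q),
        Dy_mul_apply (hc.diff q) (su.diff q),
        Dy_mul_apply (sX.diff q) (sX.diff q),
        Dy_add_apply (sX.diff q) (sX.diff q),
        Dy_const, hX, Dy_Xc]
    simp [hX0, Dy_const, Xc]
  -- RHS evaluation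
  have sDyk : IsSmooth (Dy k) := hk.dy
  have skXX : IsSmooth (k * (X * X)) := hk.mul su
  have sv : IsSmooth (X + X + k * (X * X)) := sXX.add skXX
  have hDyv : Dy (X + X + k * (X * X))
      = (fun _ => 0) + (Dy k * (X * X) + k * (fun _ => 0)) := by
    funext p
    rw [Dy_add_apply (sXX.diff p) (skXX.diff p),
        Dy_mul_apply (hk.diff p) (su.diff p),
        Dy_add_apply (sX.diff p) (sX.diff p), hDyu, hX, Dy_Xc]
    simp
  have hDxDyv : Dx (Dy (X + X + k * (X * X))) q = 0 := by
    rw [hDyv]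
    have s0 : IsSmooth (fun _ : ℝ × ℝ => (0:ℝ)) := isSmooth_const 0
    rw [Dx_add_apply (s0.diff q) (((sDyk.mul su).add (hk.mul s0)).diff q),
        Dx_add_apply ((sDyk.mul su).diff q) ((hk.mul s0).diff q),
        Dx_mul_apply (sDyk.diff q) (su.diff q),
        Dx_mul_apply (hk.diff q) (s0.diff q), hDxu, Dx_const]
    simp [hX, Xc]
  have hDxv : Dx (X + X + k * (X * X)) q = 2 := by
    rw [Dx_add_apply (sXX.diff q) (skXX.diff q),
        Dx_mul_apply (hk.diff q) (su.diff q), hDxu, hDxxu]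
    simp [hX, Xc]
  have hDyvq : Dy (X + X + k * (X * X)) q = 0 := by rw [hDyv]; simp [hX, Xc]
  simp only [Pi.add_apply, Pi.mul_apply] at key
  rw [lhs, hDxDyv, hDxv, hDyvq] at key
  simp only [hX, Xc] at key
  simp at key
  linarith

include hh ha hb hc he hf hg hk heq in
lemma eqB : ∀ q, Dy a q + h q * a q = Dy k q + e q * k q + g q := by
  intro q
  set X := Xc q with hX
  have sX : IsSmooth X := isSmooth_Xc q
  have key := congrFun (heq X sX) q
  simp only [] at key
  have hDxu : Dx X = fun _ => 1 := by rw [hX, Dx_Xc]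
  have hDyu : Dy X = fun _ => 0 := by rw [hX, Dy_Xc]
  rw [hDxu, hDyu, Dx_const] at key
  have s0 : IsSmooth (fun _ : ℝ × ℝ => (0:ℝ)) := isSmooth_const 0
  have s1 : IsSmooth (fun _ : ℝ × ℝ => (1:ℝ)) := isSmooth_const 1
  have sDyk : IsSmooth (Dy k) := hk.dy
  have sL1 : IsSmooth ((fun _ : ℝ × ℝ => (0:ℝ)) + a * (fun _ => 1)) := s0.add (ha.mul s1)
  have sL2 : IsSmooth ((fun _ : ℝ × ℝ => (0:ℝ)) + a * (fun _ => 1) + b * (fun _ => 0)) :=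
    sL1.add (hb.mul s0)
  have lhs : Dy ((fun _ : ℝ × ℝ => (0:ℝ)) + a * (fun _ => 1) + b * (fun _ => 0) + c * X) q
      = Dy a q := by
    rw [Dy_add_apply (sL2.diff q) ((hc.mul sX).diff q),
        Dy_add_apply (sL1.diff q) ((hb.mul s0).diff q),
        Dy_add_apply (s0.diff q) ((ha.mul s1).diff q),
        Dy_mul_apply (ha.diff q) (s1.diff q),
        Dy_mul_apply (hb.diff q) (s0.diff q),
        Dy_mul_apply (hc.diff q) (sX.diff q), hX, Dy_Xc]
    simp [Dy_const, Xc]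
  have skX : IsSmooth (k * X) := hk.mul sX
  have hDyv : Dy ((fun _ : ℝ × ℝ => (1:ℝ)) + k * X)
      = (fun _ => 0) + (Dy k * X + k * (fun _ => 0)) := by
    funext p
    rw [Dy_add_apply (s1.diff p) (skX.diff p),
        Dy_mul_apply (hk.diff p) (sX.diff p), hX, Dy_Xc, Dy_const]
    simp
  have hDxDyv : Dx (Dy ((fun _ : ℝ × ℝ => (1:ℝ)) + k * X)) q = Dy k q := by
    rw [hDyv,
        Dx_add_apply (s0.diff q) (((sDyk.mul sX).add (hk.mul s0)).diff q),
        Dx_add_apply ((sDyk.mul sX).diff q) ((hk.mul s0).diff q),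
        Dx_mul_apply (sDyk.diff q) (sX.diff q),
        Dx_mul_apply (hk.diff q) (s0.diff q), Dx_const, hX, Dx_Xc]
    simp [Xc]
  have hDxv : Dx ((fun _ : ℝ × ℝ => (1:ℝ)) + k * X) q = k q := by
    rw [Dx_add_apply (s1.diff q) (skX.diff q),
        Dx_mul_apply (hk.diff q) (sX.diff q), Dx_const, hX, Dx_Xc]
    simp [Xc]
  have hDyvq : Dy ((fun _ : ℝ × ℝ => (1:ℝ)) + k * X) q = 0 := by
    rw [hDyv]; simp [hX, Xc]
  simp only [Pi.add_apply, Pi.mul_apply] at key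
  rw [lhs, hDxDyv, hDxv, hDyvq] at key
  simp only [hX, Xc] at key
  simp at key
  linarith

include hh ha hb hc he hf hg hk heq in
lemma a_eq : a = f + k := by
  funext q
  set X := Xc q with hX
  set Y := Yc q with hY
  have sX : IsSmooth X := isSmooth_Xc q
  have sY : IsSmooth Y := isSmooth_Yc q
  have su : IsSmooth (X * Y) := sX.mul sY
  have key := congrFun (heq (X * Y) su) q
  simp only [] at key
  have hDxu : Dx (X * Y) = Y := by
    rw [Dx_mul_s13 sX.diff sY.diff, hX, hY, Dx_Xc, Dx_Yc]
    funext p; simp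
  have hDyu : Dy (X * Y) = X := by
    rw [Dy_mul_s13 sX.diff sY.diff, hX, hY, Dy_Xc, Dy_Yc]
    funext p; simp
  rw [hDxu, hDyu] at key
  have hDxxu : Dx Y = fun _ => 0 := by rw [hY, Dx_Yc]
  rw [hDxxu] at key
  have s0 : IsSmooth (fun _ : ℝ × ℝ => (0:ℝ)) := isSmooth_const 0
  have sDyk : IsSmooth (Dy k) := hk.dy
  have sL1 : IsSmooth ((fun _ : ℝ × ℝ => (0:ℝ)) + a * Y) := s0.add (ha.mul sY)
  have sL2 : IsSmooth ((fun _ : ℝ × ℝ => (0:ℝ)) + a * Y + b * X) := sL1.add (hb.mul sX)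
  have lhs : Dy ((fun _ : ℝ × ℝ => (0:ℝ)) + a * Y + b * X + c * (X * Y)) q = a q := by
    rw [Dy_add_apply (sL2.diff q) ((hc.mul su).diff q),
        Dy_add_apply (sL1.diff q) ((hb.mul sX).diff q),
        Dy_add_apply (s0.diff q) ((ha.mul sY).diff q),
        Dy_mul_apply (ha.diff q) (sY.diff q),
        Dy_mul_apply (hb.diff q) (sX.diff q),
        Dy_mul_apply (hc.diff q) (su.diff q), hDyu, hX, hY, Dy_Xc, Dy_Yc]
    simp [Dy_const, Xc, Yc]
  have skXY : IsSmooth (k * (X * Y)) := hk.mul su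
  have hDyv : Dy (Y + k * (X * Y)) = (fun _ => 1) + (Dy k * (X * Y) + k * X) := by
    funext p
    rw [Dy_add_apply (sY.diff p) (skXY.diff p),
        Dy_mul_apply (hk.diff p) (su.diff p), hDyu, hY, Dy_Yc]
    simp
  have hDxDyv : Dx (Dy (Y + k * (X * Y))) q = k q := by
    rw [hDyv]
    have s1 : IsSmooth (fun _ : ℝ × ℝ => (1:ℝ)) := isSmooth_const 1
    rw [Dx_add_apply (s1.diff q) (((sDyk.mul su).add (hk.mul sX)).diff q),
        Dx_add_apply ((sDyk.mul su).diff q) ((hk.mul sX).diff q),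
        Dx_mul_apply (sDyk.diff q) (su.diff q),
        Dx_mul_apply (hk.diff q) (sX.diff q), Dx_const, hDxu, hX, Dx_Xc]
    simp [Xc, Yc, hY]
  have hDxv : Dx (Y + k * (X * Y)) q = 0 := by
    rw [Dx_add_apply (sY.diff q) (skXY.diff q),
        Dx_mul_apply (hk.diff q) (su.diff q), hDxu, hY, Dx_Yc]
    simp [Xc, Yc, hX]
  have hDyvq : Dy (Y + k * (X * Y)) q = 1 := by
    rw [hDyv]; simp [hX, hY, Xc, Yc]
  simp only [Pi.add_apply, Pi.mul_apply] at key
  rw [lhs, hDxDyv, hDxv, hDyvq] at key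
  simp only [hX, hY, Xc, Yc] at key
  simp at key
  simp [Pi.add_apply]
  linarith
end Extract


/-- Key computation for the normalized form `D_x²D_y` with left symbol `Y` and right
symbol `X`: if `(D_y + h) ∘ (D_xx + a·D_x + b·D_y + c) = (D_xy + e·D_x + f·D_y + g) ∘ (D_x + k)`
on smooth functions, then `g = ∂_y f + e·f` and `h = e`; consequently the right-hand
second-order factor factors as `(D_y + e) ∘ (D_x + f)` and the whole operator factors
into three first-order factors with left factor `D_y + h` and right factor `D_x + k`. -/
theorem key_computation_Y_left_X_right
    (h a b c e f g k : Fn)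
    (hh : IsSmooth h) (ha : IsSmooth a) (hb : IsSmooth b) (hc : IsSmooth c)
    (he : IsSmooth e) (hf : IsSmooth f) (hg : IsSmooth g) (hk : IsSmooth k)
    (heq : ∀ u : Fn, IsSmooth u →
      (fun v => Dy v + h * v)
        (Dx (Dx u) + a * Dx u + b * Dy u + c * u) =
      (fun v => Dx (Dy v) + e * Dx v + f * Dy v + g * v)
        (Dx u + k * u)) :
    g = Dy f + e * f ∧ h = e ∧
    (∀ u : Fn, IsSmooth u →
      Dx (Dy u) + e * Dx u + f * Dy u + g * u =
        (fun v => Dy v + e * v) ((fun v => Dx v + f * v) u)) ∧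
    (∀ u : Fn, IsSmooth u →
      (fun v => Dy v + h * v)
        (Dx (Dx u) + a * Dx u + b * Dy u + c * u) =
      (fun v => Dy v + h * v)
        ((fun v => Dx v + f * v)
          ((fun v => Dx v + k * v) u))) := by
  have hhe : h = e := h_eq_e h a b c e f g k hh ha hb hc he hf hg hk heq
  have haf : a = f + k := a_eq h a b c e f g k hh ha hb hc he hf hg hk heq
  have hgf : g = Dy f + e * f := by
    funext q
    have h1 : Dy a q = Dy f q + Dy k q := by
      rw [haf]; exact Dy_add_apply (hf.diff q) (hk.diff q)
    have h2 : a q = f q + k q := by rw [haf]; rfl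
    have h3 := eqB h a b c e f g k hh ha hb hc he hf hg hk heq q
    rw [h1, h2, congrFun hhe q] at h3
    simp only [Pi.add_apply, Pi.mul_apply]
    ring_nf at h3 ⊢
    linarith
  have third : ∀ u : Fn, IsSmooth u →
      Dx (Dy u) + e * Dx u + f * Dy u + g * u =
        (fun v => Dy v + e * v) ((fun v => Dx v + f * v) u) := by
    intro u hu
    simp only []
    funext p
    simp only [Pi.add_apply, Pi.mul_apply]
    rw [Dy_add_apply (hu.dx.diff p) ((hf.mul hu).diff p),
        Dy_mul_apply (hf.diff p) (hu.diff p), Dx_Dy hu, hgf]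
    simp only [Pi.add_apply, Pi.mul_apply]
    ring
  refine ⟨hgf, hhe, third, ?_⟩
  intro u hu
  rw [heq u hu]
  have sv : IsSmooth (Dx u + k * u) := hu.dx.add (hk.mul hu)
  have := third (Dx u + k * u) sv
  simp only [] at this ⊢
  rw [hhe]
  exact this
end
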